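/- Let q be a real number with 0 < q < 1, let 𝒟 = {z ∈ ℂ : −1 < Re(z) < 1}, and for z ∈ 𝒟 let η_z ∈ ℓ²(ℕ; ℂ) be the vector with coordinates (p_n(z))_{n ∈ ℕ}. Then for every bounded linear operator T on ℓ²(ℕ; ℂ), the function z ↦ ⟨T η_z, η_{conj(z)}⟩ is holomorphic on 𝒟, where ⟨·,·⟩ is the inner product of ℓ²(ℕ; ℂ) and conj(z) is the complex conjugate of z. -/

import Mathlib

/-- The q-Pochhammer symbol `(x; q)_k = ∏_{j=0}^{k-1} (1 - x q^j)`. -/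
noncomputable def qPoch (x q : ℝ) (k : ℕ) : ℝ := ∏ j ∈ Finset.range k, (1 - x * q ^ j)

/-- The q-binomial coefficient `[n, k]_q = (q; q)_n / ((q; q)_k (q; q)_{n-k})`. -/
noncomputable def qbinom (q : ℝ) (n k : ℕ) : ℝ :=
  qPoch q q n / (qPoch q q k * qPoch q q (n - k))

/-- `q^z = exp(z · log q)` for a real `q > 0` and complex `z`. -/
noncomputable def cpw (q : ℝ) (z : ℂ) : ℂ := Complex.exp (z * (Real.log q : ℂ))

/-- `p_n(z) = (q^n / √((q²; q²)_n)) · Σ_{k=0}^{n} [n, k]_{q²} · q^{z(n-2k)}`. -/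
noncomputable def pfun (q : ℝ) (n : ℕ) (z : ℂ) : ℂ :=
  ((q ^ n / Real.sqrt (qPoch (q ^ 2) (q ^ 2) n) : ℝ) : ℂ) *
    ∑ k ∈ Finset.range (n + 1),
      (qbinom (q ^ 2) n k : ℂ) * cpw q (z * ((n : ℂ) - 2 * (k : ℂ)))

/-!
The coordinates `p_n` are entire functions. On a substrip `|Re z| ≤ ρ < 1` they satisfy
`|p_n(z)| ≤ C (n + 1) q^{(1 - ρ) n}`: each `|q^{z(n-2k)}|` is at most `q^{-ρ n}`, and the
q-binomials and `1 / √((q²; q²)_n)` are bounded uniformly in `n` because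
`(q²; q²)_n ≥ exp (-q² / (1 - q²)²)`. So `η = ∑ p_n e_n` converges locally uniformly in `ℓ²` and
is holomorphic on the strip. Finally `p_n(z̄)` is the conjugate of `p_n(z)`, so `η z̄ = star (η z)`
and `⟨η z̄, T η z⟩ = ⟨star (η z), T η z⟩` is a bounded bilinear expression in `η z`.
-/

open Complex

lemma Real.exp_neg_div_one_sub_le {a : ℝ} (ha : a < 1) :
    Real.exp (-(a / (1 - a))) ≤ 1 - a := by
  have h1a : 0 < 1 - a := by linarith
  rw [Real.exp_neg, inv_le_comm₀ (Real.exp_pos _) h1a]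
  calc (1 - a)⁻¹ = a / (1 - a) + 1 := by field_simp; ring
    _ ≤ Real.exp (a / (1 - a)) := Real.add_one_le_exp _

lemma exp_le_qPoch_self {r : ℝ} (hr0 : 0 ≤ r) (hr1 : r < 1) (n : ℕ) :
    Real.exp (-(r / (1 - r) ^ 2)) ≤ qPoch r r n := by
  have h1r : 0 < 1 - r := by linarith
  have hfactor (j : ℕ) : Real.exp (-(r * r ^ j / (1 - r))) ≤ 1 - r * r ^ j := by
    have hjr : r * r ^ j ≤ r := mul_le_of_le_one_right hr0 (pow_le_one₀ hr0 hr1.le)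
    refine le_trans (Real.exp_le_exp.2 ?_) (Real.exp_neg_div_one_sub_le (hjr.trans_lt hr1))
    gcongr
  have hgeom : ∑ j ∈ Finset.range n, r * r ^ j / (1 - r) ≤ r / (1 - r) ^ 2 := by
    rw [← Finset.sum_div, ← Finset.mul_sum, Finset.range_eq_Ico, sq, ← div_div]
    gcongr
    rw [div_eq_mul_inv]
    gcongr
    simpa using geom_sum_Ico_le_of_lt_one (m := 0) (n := n) hr0 hr1
  calc Real.exp (-(r / (1 - r) ^ 2))
      ≤ Real.exp (∑ j ∈ Finset.range n, -(r * r ^ j / (1 - r))) := by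
        rw [Finset.sum_neg_distrib, Real.exp_le_exp, neg_le_neg_iff]
        exact hgeom
    _ = ∏ j ∈ Finset.range n, Real.exp (-(r * r ^ j / (1 - r))) := Real.exp_sum _ _
    _ ≤ qPoch r r n := Finset.prod_le_prod (fun j _ => (Real.exp_pos _).le) (fun j _ => hfactor j)

lemma qPoch_self_le_one {r : ℝ} (hr0 : 0 ≤ r) (hr1 : r ≤ 1) (n : ℕ) : qPoch r r n ≤ 1 := by
  refine Finset.prod_le_one (fun j _ => ?_) (fun j _ => ?_) <;>
    nlinarith [pow_nonneg hr0 j, pow_le_one₀ hr0 hr1 (n := j)]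

lemma qbinom_nonneg {r : ℝ} (hr0 : 0 ≤ r) (hr1 : r < 1) (n k : ℕ) : 0 ≤ qbinom r n k := by
  have hpos (m : ℕ) : 0 < qPoch r r m := (Real.exp_pos _).trans_le (exp_le_qPoch_self hr0 hr1 m)
  exact div_nonneg (hpos n).le (mul_nonneg (hpos k).le (hpos _).le)

lemma qbinom_le {r : ℝ} (hr0 : 0 ≤ r) (hr1 : r < 1) (n k : ℕ) :
    qbinom r n k ≤ Real.exp (r / (1 - r) ^ 2) ^ 2 := by
  have hlow := exp_le_qPoch_self hr0 hr1
  calc qbinom r n k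
      ≤ 1 / (Real.exp (-(r / (1 - r) ^ 2)) * Real.exp (-(r / (1 - r) ^ 2))) := by
        refine div_le_div₀ zero_le_one (qPoch_self_le_one hr0 hr1.le n) (by positivity) ?_
        exact mul_le_mul (hlow k) (hlow _) (Real.exp_pos _).le
          ((Real.exp_pos _).trans_le (hlow k)).le
    _ = Real.exp (r / (1 - r) ^ 2) ^ 2 := by rw [Real.exp_neg]; field_simp

lemma norm_cpw {q : ℝ} (hq : 0 < q) (w : ℂ) : ‖cpw q w‖ = q ^ w.re := by
  rw [cpw, Complex.norm_exp, re_mul_ofReal, Real.rpow_def_of_pos hq, mul_comm]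

lemma norm_cpw_mul_le {q ρ : ℝ} (hq0 : 0 < q) (hq1 : q < 1) {z : ℂ} (hz : |z.re| ≤ ρ)
    {n k : ℕ} (hk : k ≤ n) :
    ‖cpw q (z * ((n : ℂ) - 2 * (k : ℂ)))‖ ≤ q ^ (-(ρ * n)) := by
  rw [norm_cpw hq0]
  refine Real.rpow_le_rpow_of_exponent_ge hq0 hq1.le ?_
  have hnk : |(n : ℝ) - 2 * k| ≤ n := by
    have : (k : ℝ) ≤ n := by exact_mod_cast hk
    rw [abs_le]; constructor <;> linarith [(k.cast_nonneg : (0 : ℝ) ≤ k)]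
  have hre : (z * ((n : ℂ) - 2 * (k : ℂ))).re = z.re * ((n : ℝ) - 2 * k) := by simp
  rw [hre, neg_le]
  calc -(z.re * ((n : ℝ) - 2 * k)) ≤ |z.re| * |(n : ℝ) - 2 * k| := by
        rw [← abs_mul]; exact neg_le_abs _
    _ ≤ ρ * n := mul_le_mul hz hnk (abs_nonneg _) ((abs_nonneg _).trans hz)

lemma norm_pfun_le {q ρ : ℝ} (hq0 : 0 < q) (hq1 : q < 1) {z : ℂ} (hz : |z.re| ≤ ρ) (n : ℕ) :
    ‖pfun q n z‖ ≤ Real.exp (q ^ 2 / (1 - q ^ 2) ^ 2) ^ 3 * ((n + 1) * (q ^ (1 - ρ)) ^ n) := by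
  set K := Real.exp (q ^ 2 / (1 - q ^ 2) ^ 2)
  have hK : 0 < K := Real.exp_pos _
  have hr0 : 0 ≤ q ^ 2 := by positivity
  have hr1 : q ^ 2 < 1 := by nlinarith
  have hP : K⁻¹ ≤ qPoch (q ^ 2) (q ^ 2) n := by
    rw [← Real.exp_neg]; exact exp_le_qPoch_self hr0 hr1 n
  have hsqrtP : K⁻¹ ≤ Real.sqrt (qPoch (q ^ 2) (q ^ 2) n) := by
    have hP0 : 0 ≤ qPoch (q ^ 2) (q ^ 2) n := (inv_pos.2 hK).le.trans hP
    refine hP.trans ((Real.le_sqrt hP0 hP0).2 ?_)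
    exact pow_le_of_le_one (by positivity) (qPoch_self_le_one hr0 hr1.le n) two_ne_zero
  have hprefactor : ‖((q ^ n / Real.sqrt (qPoch (q ^ 2) (q ^ 2) n) : ℝ) : ℂ)‖ ≤ q ^ n * K := by
    rw [Complex.norm_real, Real.norm_eq_abs, abs_of_nonneg (by positivity), div_eq_mul_inv]
    gcongr
    exact inv_le_of_inv_le₀ hK hsqrtP
  have hterm (k : ℕ) (hk : k ∈ Finset.range (n + 1)) :
      ‖(qbinom (q ^ 2) n k : ℂ) * cpw q (z * ((n : ℂ) - 2 * (k : ℂ)))‖ ≤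
        K ^ 2 * q ^ (-(ρ * n)) := by
    rw [norm_mul, Complex.norm_real, Real.norm_eq_abs, abs_of_nonneg (qbinom_nonneg hr0 hr1 n k)]
    exact mul_le_mul (qbinom_le hr0 hr1 n k)
      (norm_cpw_mul_le hq0 hq1 hz (Nat.lt_succ_iff.1 (Finset.mem_range.1 hk)))
      (norm_nonneg _) (by positivity)
  have hsum := (norm_sum_le _ _).trans (Finset.sum_le_sum hterm)
  rw [Finset.sum_const, Finset.card_range, nsmul_eq_mul] at hsum
  have hpow : (q : ℝ) ^ n * q ^ (-(ρ * n)) = (q ^ (1 - ρ)) ^ n := by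
    rw [← Real.rpow_mul_natCast hq0.le, ← Real.rpow_natCast, ← Real.rpow_add hq0]
    ring_nf
  calc ‖pfun q n z‖ ≤ (q ^ n * K) * ((n + 1 : ℕ) * (K ^ 2 * q ^ (-(ρ * n)))) := by
        rw [pfun, norm_mul]
        exact mul_le_mul hprefactor hsum (norm_nonneg _) (by positivity)
    _ = K ^ 3 * ((n + 1) * (q ^ n * q ^ (-(ρ * n)))) := by push_cast; ring
    _ = K ^ 3 * ((n + 1) * (q ^ (1 - ρ)) ^ n) := by rw [hpow]

lemma summable_add_one_mul_geometric {b : ℝ} (hb0 : 0 ≤ b) (hb1 : b < 1) :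
    Summable (fun n : ℕ => (n + 1) * b ^ n) := by
  have hb : ‖b‖ < 1 := by rwa [Real.norm_of_nonneg hb0]
  simpa [add_mul] using
    (summable_pow_mul_geometric_of_norm_lt_one 1 hb).add (summable_geometric_of_lt_one hb0 hb1)

open ComplexConjugate in
lemma pfun_conj (q : ℝ) (n : ℕ) (z : ℂ) : pfun q n (conj z) = conj (pfun q n z) := by
  simp only [pfun, cpw, map_mul, map_sum, Complex.conj_ofReal, ← Complex.exp_conj, map_sub,
    map_natCast, map_ofNat]

lemma differentiable_pfun (q : ℝ) (n : ℕ) : Differentiable ℂ (pfun q n) := by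
  unfold pfun cpw
  fun_prop

open scoped ENNReal in
theorem lp.differentiableOn_of_norm_apply_le {ι : Type*} [DecidableEq ι] {E : ι → Type*}
    [∀ i, NormedAddCommGroup (E i)] [∀ i, NormedSpace ℂ (E i)] [∀ i, CompleteSpace (E i)]
    {p : ℝ≥0∞} [Fact (1 ≤ p)] (hp : p ≠ ⊤) {U : Set ℂ} (hU : IsOpen U) {η : ℂ → lp E p}
    (hη : ∀ i, DifferentiableOn ℂ (fun z => η z i) U) {u : ι → ℝ} (hu : Summable u)
    (hηu : ∀ i, ∀ z ∈ U, ‖η z i‖ ≤ u i) :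
    DifferentiableOn ℂ η U := by
  have hsum := differentiableOn_tsum_of_summable_norm (F := fun i z => lp.single p i (η z i)) hu
    (fun i => (lp.singleContinuousLinearMap ℂ E p i).differentiable.comp_differentiableOn (hη i))
    hU (fun i z hz => by
      simpa [lp.norm_single (zero_lt_one.trans_le Fact.out)] using hηu i z hz)
  exact hsum.congr fun z _ => (lp.hasSum_single hp (η z)).tsum_eq.symm

section InnerStar

variable (𝕜 E : Type*) [RCLike 𝕜] [NormedAddCommGroup E] [InnerProductSpace 𝕜 E]
  [StarAddMonoid E] [NormedStarGroup E] [StarModule 𝕜 E]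

noncomputable def innerStarSL : E →L[𝕜] E →L[𝕜] 𝕜 :=
  (innerSL 𝕜).comp (starₗᵢ 𝕜 : E ≃ₗᵢ⋆[𝕜] E).toContinuousLinearEquiv.toContinuousLinearMap

lemma innerStarSL_apply (x y : E) : innerStarSL 𝕜 E x y = inner 𝕜 (star x) y := rfl

end InnerStar

section Strip

variable {q : ℝ} {η : ℂ → lp (fun _ : ℕ => ℂ) 2}

lemma differentiableOn_of_apply_eq_pfun (hq0 : 0 < q) (hq1 : q < 1)
    (hη : ∀ z : ℂ, -1 < z.re → z.re < 1 → ∀ n : ℕ, (η z : ∀ _ : ℕ, ℂ) n = pfun q n z) :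
    DifferentiableOn ℂ η {z : ℂ | -1 < z.re ∧ z.re < 1} := by
  rintro z ⟨hz1, hz2⟩
  obtain ⟨ρ, hzρ, hρ1⟩ := exists_between (abs_lt.2 ⟨hz1, hz2⟩)
  set U := {w : ℂ | |w.re| < ρ}
  have hU : IsOpen U := isOpen_lt (continuous_abs.comp continuous_re) continuous_const
  have hηU (w : ℂ) (hw : w ∈ U) (n : ℕ) : (η w : ∀ _ : ℕ, ℂ) n = pfun q n w :=
    have hw1 := abs_lt.1 (lt_trans hw hρ1)
    hη w hw1.1 hw1.2 n
  have hb0 : 0 ≤ q ^ (1 - ρ) := Real.rpow_nonneg hq0.le _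
  have hb1 : q ^ (1 - ρ) < 1 := Real.rpow_lt_one hq0.le hq1 (sub_pos.2 hρ1)
  have hdiff : DifferentiableOn ℂ η U :=
    lp.differentiableOn_of_norm_apply_le ENNReal.ofNat_ne_top hU
      (fun n => (differentiable_pfun q n).differentiableOn.congr fun w hw => hηU w hw n)
      ((summable_add_one_mul_geometric hb0 hb1).mul_left _)
      (fun n w hw => (hηU w hw n).symm ▸ norm_pfun_le hq0 hq1 (le_of_lt hw) n)
  exact (hdiff.differentiableAt (hU.mem_nhds hzρ)).differentiableWithinAt

lemma apply_conj_eq_star_of_apply_eq_pfun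
    (hη : ∀ z : ℂ, -1 < z.re → z.re < 1 → ∀ n : ℕ, (η z : ∀ _ : ℕ, ℂ) n = pfun q n z)
    {z : ℂ} (hz1 : -1 < z.re) (hz2 : z.re < 1) :
    η (starRingEnd ℂ z) = star (η z) := by
  ext n
  rw [hη _ (by simpa using hz1) (by simpa using hz2), pfun_conj, lp.star_apply, hη z hz1 hz2]
  rfl

end Strip

theorem stmt12 (q : ℝ) (hq0 : 0 < q) (hq1 : q < 1) :
    ∀ η : ℂ → lp (fun _ : ℕ => ℂ) 2,
      (∀ z : ℂ, -1 < z.re → z.re < 1 → ∀ n : ℕ, (η z : ∀ _ : ℕ, ℂ) n = pfun q n z) →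
      ∀ T : lp (fun _ : ℕ => ℂ) 2 →L[ℂ] lp (fun _ : ℕ => ℂ) 2,
        DifferentiableOn ℂ
          (fun z : ℂ => (inner ℂ (η (starRingEnd ℂ z)) (T (η z)) : ℂ))
          {z : ℂ | -1 < z.re ∧ z.re < 1} := by
  intro η hη T
  have hηd := differentiableOn_of_apply_eq_pfun hq0 hq1 hη
  have hpair : DifferentiableOn ℂ (fun z => innerStarSL ℂ _ (η z) (T (η z)))
      {z : ℂ | -1 < z.re ∧ z.re < 1} :=
    ((innerStarSL ℂ _).differentiable.comp_differentiableOn hηd).clm_apply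
      (T.differentiable.comp_differentiableOn hηd)
  refine hpair.congr fun z ⟨hz1, hz2⟩ => ?_
  rw [innerStarSL_apply, apply_conj_eq_star_of_apply_eq_pfun hη hz1 hz2]
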